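/- arXiv:2004.02294 — 5 statements merged into one kernel-verified Lean document; each statement's English description precedes it below -/
import Mathlib

section
/- The entropy function H(X) = -∑_i X_i log(X_i) on the probability simplex in ℝ^N is 1-strongly concave with respect to the ℓ1-norm; equivalently, for any two points X, Y in the simplex, ⟨∇(-H)(X) - ∇(-H)(Y), X - Y⟩ ≥ ‖X - Y‖₁². -/
open Real

lemma aux_hasDerivAt (t : ℝ) (ht : 0 < t) :
    HasDerivAt (fun t : ℝ => Real.log t - (2 - 4 * (t + 1)⁻¹))
      (t⁻¹ - (0 - 4 * (-1 / (t + 1) ^ 2))) t := by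
  have hl := Real.hasDerivAt_log (ne_of_gt ht)
  have hi : HasDerivAt (fun t : ℝ => (t + 1)⁻¹) (-1 / (t + 1) ^ 2) t := by
    have := ((hasDerivAt_id t).add_const 1).inv (by simp; linarith)
    exact this
  exact hl.sub ((hasDerivAt_const t 2).sub (hi.const_mul 4))

lemma log_two_div_aux : ∀ t : ℝ, 1 ≤ t → 2 * (t - 1) / (t + 1) ≤ Real.log t := by
  have hmono : MonotoneOn (fun t : ℝ => Real.log t - (2 - 4 * (t + 1)⁻¹)) (Set.Ici 1) := by
    apply monotoneOn_of_deriv_nonneg (convex_Ici 1)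
    · apply ContinuousOn.sub
      · exact Real.continuousOn_log.mono (by intro x hx; simp at hx ⊢; linarith)
      · fun_prop (disch := intro x hx; simp at hx ⊢; nlinarith)
    · intro t ht
      simp only [interior_Ici, Set.mem_Ioi] at ht
      exact (aux_hasDerivAt t (by linarith)).differentiableAt.differentiableWithinAt
    · intro t ht
      simp only [interior_Ici, Set.mem_Ioi] at ht
      rw [(aux_hasDerivAt t (by linarith)).deriv]
      have h2 : (0:ℝ) < t := by linarith
      have h3 : (0:ℝ) < (t+1)^2 := by positivity
      rw [sub_nonneg]
      have key : 0 - 4 * (-1 / (t + 1) ^ 2) = 4 / (t+1)^2 := by ring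
      rw [key, div_le_iff₀ h3, inv_eq_one_div, div_mul_eq_mul_div, le_div_iff₀ h2]
      nlinarith [sq_nonneg (t-1)]
  intro t ht
  have := hmono (Set.self_mem_Ici) (Set.mem_Ici.mpr ht) ht
  simp only [Real.log_one] at this
  have h1 : (0:ℝ) < t + 1 := by linarith
  rw [div_le_iff₀ h1]
  have : (2:ℝ) - 4 * (t+1)⁻¹ ≤ Real.log t := by linarith [this]
  have h4 : 2 - 4 * (t+1)⁻¹ = (2*(t-1))/(t+1) := by field_simp; ring
  calc 2*(t-1) = (2*(t-1))/(t+1) * (t+1) := by field_simp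
    _ ≤ Real.log t * (t+1) := by apply mul_le_mul_of_nonneg_right (by rw [← h4]; exact this) (le_of_lt h1)

lemma pointwise_key (x y : ℝ) (hx : 0 < x) (hy : 0 < y) :
    2 * (x - y) ^ 2 / (x + y) ≤ (Real.log x - Real.log y) * (x - y) := by
  have hsym : ∀ x y : ℝ, 0 < x → 0 < y → y ≤ x →
      2 * (x - y) ^ 2 / (x + y) ≤ (Real.log x - Real.log y) * (x - y) := by
    intro x y hx hy hle
    have ht : 1 ≤ x / y := (one_le_div hy).mpr hle
    have h1 := log_two_div_aux (x / y) ht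
    rw [Real.log_div (ne_of_gt hx) (ne_of_gt hy)] at h1
    have h2 : 2 * (x / y - 1) / (x / y + 1) = 2 * (x - y) / (x + y) := by
      rw [div_eq_div_iff (by positivity) (by positivity)]
      field_simp
    rw [h2] at h1
    have h3 : 0 ≤ x - y := by linarith
    calc 2 * (x - y) ^ 2 / (x + y) = 2 * (x - y) / (x + y) * (x - y) := by ring
      _ ≤ (Real.log x - Real.log y) * (x - y) := mul_le_mul_of_nonneg_right h1 h3
  rcases le_total y x with h | h
  · exact hsym x y hx hy h
  · have := hsym y x hy hx h
    calc 2 * (x - y) ^ 2 / (x + y) = 2 * (y - x) ^ 2 / (y + x) := by ring_nf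
      _ ≤ (Real.log y - Real.log x) * (y - x) := this
      _ = (Real.log x - Real.log y) * (x - y) := by ring


/-- The entropy `H(X) = -∑ X i * log (X i)` is 1-strongly concave on the
probability simplex w.r.t. the ℓ1-norm: for `X, Y` in the relative interior of the simplex,
`⟨∇(-H)(X) - ∇(-H)(Y), X - Y⟩ ≥ ‖X - Y‖₁²`.  Here `∇(-H)(X) i = log (X i) + 1`, so the
inner product is `∑ i, (log (X i) - log (Y i)) * (X i - Y i)`. -/
theorem entropy_one_strongly_concave_l1 (N : ℕ) (X Y : Fin N → ℝ)
    (hX : ∀ i, 0 < X i) (hY : ∀ i, 0 < Y i)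
    (hXs : ∑ i, X i = 1) (hYs : ∑ i, Y i = 1) :
    (∑ i, |X i - Y i|) ^ 2 ≤
      ∑ i, ((Real.log (X i) + 1) - (Real.log (Y i) + 1)) * (X i - Y i) := by
  have hCS := Finset.sq_sum_div_le_sum_sq_div Finset.univ (fun i => |X i - Y i|)
    (g := fun i => X i + Y i) (fun i _ => by simpa using add_pos (hX i) (hY i))
  have hsum : ∑ i, (X i + Y i) = 2 := by rw [Finset.sum_add_distrib, hXs, hYs]; norm_num
  rw [hsum] at hCS
  have h1 : (∑ i, |X i - Y i|) ^ 2 ≤ ∑ i, 2 * (X i - Y i)^2 / (X i + Y i) := by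
    rw [div_le_iff₀ (by norm_num : (0:ℝ) < 2)] at hCS
    calc (∑ i, |X i - Y i|) ^ 2 ≤ (∑ i, |X i - Y i| ^ 2 / (X i + Y i)) * 2 := hCS
      _ = ∑ i, 2 * (X i - Y i)^2 / (X i + Y i) := by
          rw [Finset.sum_mul]; congr 1; ext i; rw [sq_abs]; ring
  refine h1.trans (Finset.sum_le_sum fun i _ => ?_)
  have := pointwise_key (X i) (Y i) (hX i) (hY i)
  calc 2 * (X i - Y i)^2 / (X i + Y i) ≤ (Real.log (X i) - Real.log (Y i)) * (X i - Y i) := this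
    _ = ((Real.log (X i) + 1) - (Real.log (Y i) + 1)) * (X i - Y i) := by ring
end

section
/- The explicit update u_k^{new} = u_k + ln p_k − ln p_k(B(U)) (entrywise, holding all other blocks fixed) is a minimizer of φ over the k-th block: for all v ∈ ℝ^n, φ(u₁,…,u_k^{new},…,u_m) ≤ φ(u₁,…,v,…,u_m). -/
/-- The `k`-th marginal of an order-`m` tensor. -/
noncomputable def marginal (m n : ℕ) (X : (Fin m → Fin n) → ℝ) (k : Fin m) (j : Fin n) : ℝ :=
  ∑ i : Fin m → Fin n, if i k = j then X i else 0

/-- The tensor `B(U)` with entries `exp(∑_k [u_k]_{i_k} − C_{i₁…i_m}/γ)`. -/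
noncomputable def Btensor (m n : ℕ) (γ : ℝ) (C : (Fin m → Fin n) → ℝ)
    (U : Fin m → Fin n → ℝ) : (Fin m → Fin n) → ℝ :=
  fun i => Real.exp ((∑ k, U k (i k)) - C i / γ)

/-- `Σ(U)`: the sum of all entries of `B(U)`. -/
noncomputable def SigmaB (m n : ℕ) (γ : ℝ) (C : (Fin m → Fin n) → ℝ)
    (U : Fin m → Fin n → ℝ) : ℝ :=
  ∑ i : Fin m → Fin n, Btensor m n γ C U i

/-- The dual objective `φ(U) = γ[ln Σ(U) − ∑_k u_kᵀ p_k]`. -/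
noncomputable def phi (m n : ℕ) (γ : ℝ) (C : (Fin m → Fin n) → ℝ)
    (p : Fin m → Fin n → ℝ) (U : Fin m → Fin n → ℝ) : ℝ :=
  γ * (Real.log (SigmaB m n γ C U) - ∑ k, ∑ j, U k j * p k j)

/-- the explicit update `u_k^{new} = u_k + ln p_k − ln p_k(B(U))` minimizes
`φ` over the `k`-th block, all other blocks being held fixed. -/
theorem block_update_minimizes (m n : ℕ) (γ : ℝ) (hγ : 0 < γ)
    (C : (Fin m → Fin n) → ℝ) (hC : ∀ i, 0 ≤ C i)
    (p : Fin m → Fin n → ℝ) (hp0 : ∀ k j, 0 < p k j) (hp1 : ∀ k, ∑ j, p k j = 1)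
    (U : Fin m → Fin n → ℝ) (k : Fin m)
    (hmarg : ∀ j, 0 < marginal m n (Btensor m n γ C U) k j)
    (unew : Fin n → ℝ)
    (hunew : ∀ j, unew j =
      U k j + Real.log (p k j) - Real.log (marginal m n (Btensor m n γ C U) k j)) :
    ∀ v : Fin n → ℝ,
      phi m n γ C p (Function.update U k unew) ≤ phi m n γ C p (Function.update U k v) := by
  intro v
  set r : Fin n → ℝ := marginal m n (Btensor m n γ C U) k with hr
  -- n is positive
  have hn : Nonempty (Fin n) := by
    rcases Nat.eq_zero_or_pos n with h | h
    · exfalso; have := hp1 k; subst h; simpa using this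
    · exact ⟨⟨0, h⟩⟩
  have hsum_upd : ∀ (w : Fin n → ℝ) (i : Fin m → Fin n),
      (∑ l, Function.update U k w l (i l)) = (∑ l, U l (i l)) + (w (i k) - U k (i k)) := by
    intro w i
    have h : ∀ l, Function.update U k w l (i l)
        = U l (i l) + (if l = k then w (i k) - U k (i k) else 0) := by
      intro l
      by_cases h : l = k
      · subst h; simp
      · simp [Function.update_of_ne h, h]
    simp only [h, Finset.sum_add_distrib, Finset.sum_ite_eq' Finset.univ k,
      Finset.mem_univ, if_true]
  have hSigma : ∀ w : Fin n → ℝ,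
      SigmaB m n γ C (Function.update U k w) = ∑ j, Real.exp (w j - U k j) * r j := by
    intro w
    have h1 : SigmaB m n γ C (Function.update U k w)
        = ∑ i : Fin m → Fin n, Real.exp (w (i k) - U k (i k)) * Btensor m n γ C U i := by
      unfold SigmaB Btensor
      refine Finset.sum_congr rfl fun i _ => ?_
      rw [hsum_upd w i, show (∑ l, U l (i l)) + (w (i k) - U k (i k)) - C i / γ
          = (w (i k) - U k (i k)) + ((∑ l, U l (i l)) - C i / γ) by ring, Real.exp_add]
    rw [h1, hr]
    unfold marginal
    simp only [Finset.mul_sum, mul_ite, mul_zero]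
    rw [Finset.sum_comm]
    refine Finset.sum_congr rfl fun i _ => ?_
    rw [Finset.sum_ite_eq Finset.univ (i k)]
    simp
  -- linear term
  have hL : ∀ w : Fin n → ℝ,
      (∑ l, ∑ j, Function.update U k w l j * p l j)
        = (∑ j, w j * p k j) + ∑ l ∈ Finset.univ \ {k}, ∑ j, U l j * p l j := by
    intro w
    have h : (fun l => ∑ j, Function.update U k w l j * p l j)
        = Function.update (fun l => ∑ j, U l j * p l j) k (∑ j, w j * p k j) := by
      funext l
      by_cases h : l = k
      · subst h; simp
      · simp [Function.update_of_ne h, h]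
    rw [show (∑ l, ∑ j, Function.update U k w l j * p l j)
        = ∑ l, Function.update (fun l => ∑ j, U l j * p l j) k (∑ j, w j * p k j) l from
        Finset.sum_congr rfl fun l _ => congrFun h l]
    rw [Finset.sum_update_of_mem (Finset.mem_univ k)]
  -- key per-coordinate facts
  have hexp_new : ∀ j, Real.exp (unew j - U k j) * r j = p k j := by
    intro j
    rw [hunew j, show U k j + Real.log (p k j) - Real.log (r j) - U k j
        = Real.log (p k j) - Real.log (r j) by ring, Real.exp_sub,
      Real.exp_log (hp0 k j), Real.exp_log (hmarg j)]
    exact div_mul_cancel₀ _ (hmarg j).ne'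
  have hexp_v : ∀ j, Real.exp (v j - U k j) * r j = p k j * Real.exp (v j - unew j) := by
    intro j
    rw [show v j - U k j = (v j - unew j) + (unew j - U k j) by ring, Real.exp_add,
      mul_assoc, hexp_new j]
    ring
  have hSnew : SigmaB m n γ C (Function.update U k unew) = 1 := by
    rw [hSigma unew]
    simp only [hexp_new]
    exact hp1 k
  have hSv : SigmaB m n γ C (Function.update U k v)
      = ∑ j, p k j * Real.exp (v j - unew j) := by
    rw [hSigma v]; exact Finset.sum_congr rfl fun j _ => hexp_v j
  have hSvpos : 0 < ∑ j, p k j * Real.exp (v j - unew j) :=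
    Finset.sum_pos (fun j _ => mul_pos (hp0 k j) (Real.exp_pos _)) Finset.univ_nonempty
  -- Jensen
  have hjensen : Real.exp (∑ j, p k j • (v j - unew j))
      ≤ ∑ j, p k j • Real.exp (v j - unew j) := by
    refine ConvexOn.map_sum_le convexOn_exp (fun j _ => (hp0 k j).le)
      (hp1 k) (fun j _ => Set.mem_univ _) |>.trans_eq ?_
    rfl
  have hjensen' : (∑ j, (v j - unew j) * p k j)
      ≤ Real.log (∑ j, p k j * Real.exp (v j - unew j)) := by
    rw [Real.le_log_iff_exp_le hSvpos]
    calc Real.exp (∑ j, (v j - unew j) * p k j)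
        = Real.exp (∑ j, p k j • (v j - unew j)) := by
          congr 1; exact Finset.sum_congr rfl fun j _ => (mul_comm _ _)
      _ ≤ ∑ j, p k j • Real.exp (v j - unew j) := hjensen
      _ = ∑ j, p k j * Real.exp (v j - unew j) := rfl
  unfold phi
  rw [hSnew, hSv, hL unew, hL v, Real.log_one]
  have : (∑ j, v j * p k j) - (∑ j, unew j * p k j)
      ≤ Real.log (∑ j, p k j * Real.exp (v j - unew j)) := by
    rw [← Finset.sum_sub_distrib]
    refine le_trans (le_of_eq ?_) hjensen'
    exact Finset.sum_congr rfl fun j _ => by ring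
  nlinarith [this]
end

section
/- After the block update u_k^{new} = u_k + ln p_k − ln p_k(B(U)), the k-th marginal of the new tensor B(u₁,…,u_k^{new},…,u_m) equals p_k divided by the new total sum; in particular since the new total sum is 1, the k-th marginal of B(u₁,…,u_k^{new},…,u_m) equals p_k exactly. -/
/-- after the block update `u_k^{new} = u_k + ln p_k − ln p_k(B(U))`,
the `k`-th marginal of the new tensor `B(u₁,…,u_k^{new},…,u_m)` equals `p_k` exactly. -/
theorem block_update_marginal_eq (m n : ℕ) (γ : ℝ) (hγ : 0 < γ)
    (C : (Fin m → Fin n) → ℝ) (hC : ∀ i, 0 ≤ C i)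
    (p : Fin m → Fin n → ℝ) (hp0 : ∀ k j, 0 < p k j) (hp1 : ∀ k, ∑ j, p k j = 1)
    (U : Fin m → Fin n → ℝ) (k : Fin m)
    (hmarg : ∀ j, 0 < marginal m n (Btensor m n γ C U) k j)
    (unew : Fin n → ℝ)
    (hunew : ∀ j, unew j =
      U k j + Real.log (p k j) - Real.log (marginal m n (Btensor m n γ C U) k j)) :
    ∀ j, marginal m n (Btensor m n γ C (Function.update U k unew)) k j = p k j := by
  intro j
  have key : ∀ i : Fin m → Fin n, i k = j →
      Btensor m n γ C (Function.update U k unew) i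
        = Btensor m n γ C U i * (p k j / marginal m n (Btensor m n γ C U) k j) := by
    intro i hik
    have hsum : (∑ l, Function.update U k unew l (i l))
        = (∑ l, U l (i l)) + (unew (i k) - U k (i k)) := by
      rw [← Finset.add_sum_erase _ (fun l => Function.update U k unew l (i l)) (Finset.mem_univ k),
          ← Finset.add_sum_erase _ (fun l => U l (i l)) (Finset.mem_univ k)]
      have he : ∀ l ∈ Finset.univ.erase k, Function.update U k unew l (i l) = U l (i l) := by
        intro l hl
        rw [Function.update_of_ne (Finset.ne_of_mem_erase hl)]
      rw [Finset.sum_congr rfl he, Function.update_self]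
      ring
    have hd : Real.exp (Real.log (p k j) - Real.log (marginal m n (Btensor m n γ C U) k j))
        = p k j / marginal m n (Btensor m n γ C U) k j := by
      rw [Real.exp_sub, Real.exp_log (hp0 k j), Real.exp_log (hmarg j)]
    simp only [Btensor]
    rw [hsum, hik, hunew j,
      show (∑ l, U l (i l)) + (U k j + Real.log (p k j)
          - Real.log (marginal m n (Btensor m n γ C U) k j) - U k j) - C i / γ
        = ((∑ l, U l (i l)) - C i / γ)
          + (Real.log (p k j) - Real.log (marginal m n (Btensor m n γ C U) k j)) by ring,
      Real.exp_add, hd]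
  have h1 : marginal m n (Btensor m n γ C (Function.update U k unew)) k j
      = (∑ i : Fin m → Fin n, if i k = j then Btensor m n γ C U i else 0)
          * (p k j / marginal m n (Btensor m n γ C U) k j) := by
    rw [Finset.sum_mul]
    unfold marginal
    refine Finset.sum_congr rfl fun i _ => ?_
    by_cases h : i k = j
    · rw [if_pos h, if_pos h, key i h]; rfl
    · rw [if_neg h, if_neg h, zero_mul]
  rw [h1, show (∑ i : Fin m → Fin n, if i k = j then Btensor m n γ C U i else 0)
      = marginal m n (Btensor m n γ C U) k j from rfl,
    mul_div_cancel₀ _ (ne_of_gt (hmarg j))]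
end

section
/- Any optimal solution U* = (u₁*,…,u_m*) of the dual MOT problem satisfies, for each block ξ, max_η [u_ξ*]_η − min_η [u_ξ*]_η ≤ ‖C‖_∞/γ − ln min_η [p_ξ]_η. -/
/-- any critical point `U*` of the dual objective (i.e. one satisfying the
first-order conditions `[p_ξ(B(U*))]_η / Σ(U*) = [p_ξ]_η`) satisfies, for every block `ξ`,
`max_η [u_ξ*]_η − min_η [u_ξ*]_η ≤ ‖C‖_∞/γ − ln min_η [p_ξ]_η`. -/
theorem dual_optimal_oscillation_bound (m n : ℕ) (hm : 0 < m) (hn : 0 < n)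
    (γ : ℝ) (hγ : 0 < γ)
    (C : (Fin m → Fin n) → ℝ) (hC : ∀ i, 0 ≤ C i)
    (p : Fin m → Fin n → ℝ) (hp0 : ∀ k j, 0 < p k j) (hp1 : ∀ k, ∑ j, p k j = 1)
    (U : Fin m → Fin n → ℝ)
    (hcrit : ∀ ξ η, marginal m n (Btensor m n γ C U) ξ η / SigmaB m n γ C U = p ξ η) :
    ∀ ξ : Fin m,
      Finset.univ.sup' ⟨⟨0, hn⟩, Finset.mem_univ _⟩ (U ξ)
        - Finset.univ.inf' ⟨⟨0, hn⟩, Finset.mem_univ _⟩ (U ξ) ≤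
      (Finset.univ.sup' ⟨fun _ => ⟨0, hn⟩, Finset.mem_univ _⟩ C) / γ
        - Real.log (Finset.univ.inf' ⟨⟨0, hn⟩, Finset.mem_univ _⟩ (p ξ)) := by
  intro ξ
  haveI : Nonempty (Fin n) := ⟨⟨0, hn⟩⟩
  have hSig : 0 < SigmaB m n γ C U :=
    Finset.sum_pos (fun i _ => Real.exp_pos _) Finset.univ_nonempty
  set M := Finset.univ.sup' ⟨fun _ => ⟨0, hn⟩, Finset.mem_univ _⟩ C with hMdef
  have hM : ∀ i, C i ≤ M := fun i => Finset.le_sup' C (Finset.mem_univ i)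
  set g : Fin n → ℝ := fun η => ∑ i ∈ Finset.univ.filter (fun i : Fin m → Fin n => i ξ = η),
      Real.exp (∑ k ∈ Finset.univ.erase ξ, U k (i k)) with hgdef
  have hgpos : ∀ η, 0 < g η := by
    intro η
    apply Finset.sum_pos (fun i _ => Real.exp_pos _)
    exact ⟨fun _ => η, Finset.mem_filter.2 ⟨Finset.mem_univ _, rfl⟩⟩
  have hgconst : ∀ η η', g η = g η' := by
    intro η η'
    apply Finset.sum_nbij' (fun i => Function.update i ξ η') (fun i => Function.update i ξ η)
    · intro a ha
      exact Finset.mem_filter.2 ⟨Finset.mem_univ _, Function.update_self _ _ _⟩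
    · intro a ha
      exact Finset.mem_filter.2 ⟨Finset.mem_univ _, Function.update_self _ _ _⟩
    · intro a ha
      have haξ : a ξ = η := (Finset.mem_filter.1 ha).2
      rw [Function.update_idem, ← haξ, Function.update_eq_self]
    · intro a ha
      have haξ : a ξ = η' := (Finset.mem_filter.1 ha).2
      rw [Function.update_idem, ← haξ, Function.update_eq_self]
    · intro a ha
      congr 1
      apply Finset.sum_congr rfl
      intro k hk
      rw [Function.update_of_ne (Finset.ne_of_mem_erase hk)]
  have hmarg : ∀ η, marginal m n (Btensor m n γ C U) ξ η
      = ∑ i ∈ Finset.univ.filter (fun i : Fin m → Fin n => i ξ = η), Btensor m n γ C U i := by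
    intro η
    rw [marginal, Finset.sum_filter]
  have hsplit : ∀ η, ∀ i : Fin m → Fin n, i ξ = η →
      (∑ k, U k (i k)) = U ξ η + ∑ k ∈ Finset.univ.erase ξ, U k (i k) := by
    intro η i hiξ
    rw [← Finset.add_sum_erase _ _ (Finset.mem_univ ξ), hiξ]
  have hpSig : ∀ η, marginal m n (Btensor m n γ C U) ξ η = p ξ η * SigmaB m n γ C U := by
    intro η
    rw [← hcrit ξ η, div_mul_cancel₀ _ hSig.ne']
  have hlow : ∀ η, Real.exp (U ξ η - M / γ) * g η ≤ p ξ η * SigmaB m n γ C U := by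
    intro η
    rw [← hpSig η, hmarg η, hgdef, Finset.mul_sum]
    apply Finset.sum_le_sum
    intro i hi
    have hiξ : i ξ = η := (Finset.mem_filter.1 hi).2
    show Real.exp (U ξ η - M / γ) * Real.exp (∑ k ∈ Finset.univ.erase ξ, U k (i k)) ≤
      Real.exp ((∑ k, U k (i k)) - C i / γ)
    rw [← Real.exp_add, hsplit η i hiξ]
    apply Real.exp_le_exp.2
    have hCi : C i / γ ≤ M / γ := by gcongr; exact hM i
    linarith
  have hup : ∀ η, p ξ η * SigmaB m n γ C U ≤ Real.exp (U ξ η) * g η := by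
    intro η
    rw [← hpSig η, hmarg η, hgdef, Finset.mul_sum]
    apply Finset.sum_le_sum
    intro i hi
    have hiξ : i ξ = η := (Finset.mem_filter.1 hi).2
    show Real.exp ((∑ k, U k (i k)) - C i / γ) ≤
      Real.exp (U ξ η) * Real.exp (∑ k ∈ Finset.univ.erase ξ, U k (i k))
    rw [← Real.exp_add, hsplit η i hiξ]
    apply Real.exp_le_exp.2
    have hCi : 0 ≤ C i / γ := div_nonneg (hC i) hγ.le
    linarith
  obtain ⟨η, _, hη⟩ := Finset.exists_mem_eq_sup' (⟨⟨0, hn⟩, Finset.mem_univ _⟩ :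
    (Finset.univ : Finset (Fin n)).Nonempty) (U ξ)
  obtain ⟨η', _, hη'⟩ := Finset.exists_mem_eq_inf' (⟨⟨0, hn⟩, Finset.mem_univ _⟩ :
    (Finset.univ : Finset (Fin n)).Nonempty) (U ξ)
  set pm := Finset.univ.inf' ⟨⟨0, hn⟩, Finset.mem_univ _⟩ (p ξ) with hpmdef
  have hpm : 0 < pm := by
    obtain ⟨j0, _, hj0⟩ := Finset.exists_mem_eq_inf' (⟨⟨0, hn⟩, Finset.mem_univ _⟩ :
      (Finset.univ : Finset (Fin n)).Nonempty) (p ξ)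
    rw [hpmdef, hj0]; exact hp0 ξ j0
  have hpm' : pm ≤ p ξ η' := Finset.inf'_le (p ξ) (Finset.mem_univ η')
  have hpη1 : p ξ η ≤ 1 := by
    rw [← hp1 ξ]
    exact Finset.single_le_sum (fun j _ => (hp0 ξ j).le) (Finset.mem_univ η)
  have h1 := hlow η
  have h2 := hup η'
  rw [hgconst η η'] at h1
  have key : Real.exp (U ξ η - M / γ) * pm ≤ Real.exp (U ξ η') := by
    have e1 : Real.exp (U ξ η - M / γ) ≤ SigmaB m n γ C U / g η' := by
      rw [le_div_iff₀ (hgpos η')]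
      calc Real.exp (U ξ η - M / γ) * g η' ≤ p ξ η * SigmaB m n γ C U := h1
        _ ≤ 1 * SigmaB m n γ C U := by nlinarith
        _ = SigmaB m n γ C U := one_mul _
    have e2 : pm * (SigmaB m n γ C U / g η') ≤ Real.exp (U ξ η') := by
      rw [mul_div_assoc', div_le_iff₀ (hgpos η')]
      calc pm * SigmaB m n γ C U ≤ p ξ η' * SigmaB m n γ C U := by nlinarith
        _ ≤ Real.exp (U ξ η') * g η' := h2
    calc Real.exp (U ξ η - M / γ) * pm ≤ SigmaB m n γ C U / g η' * pm :=
          mul_le_mul_of_nonneg_right e1 hpm.le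
      _ = pm * (SigmaB m n γ C U / g η') := mul_comm _ _
      _ ≤ Real.exp (U ξ η') := e2
  have key2 : U ξ η - M / γ + Real.log pm ≤ U ξ η' := by
    have := key
    rw [← Real.exp_log hpm, ← Real.exp_add] at this
    exact Real.exp_le_exp.1 this
  rw [hη, hη']
  linarith
end

section
/- Primal objective decomposition bound: for any feasible X̂ for the non-regularized MOT with marginals p_k, any X̂ᵗ in the simplex (not necessarily feasible), and solutions X* (non-regularized) and X*_γ (regularized), ⟨C, X̂⟩ ≤ ⟨C, X*⟩ + γ m ln n + (F(X̂ᵗ) + φ(ηᵗ)) + 2‖C‖_∞ ∑_{k=1}^m ‖p_k(X̂ᵗ) − p_k‖₁, provided ‖X̂ − X̂ᵗ‖₁ ≤ 2∑_k ‖p_k(X̂ᵗ) − p_k‖₁ and F(X̂ᵗ) + φ(ηᵗ) ≥ F(X̂ᵗ) − F(X*_γ) (weak duality). -/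
/-- Pointwise entropy bound: for `x ≥ 0` and `N > 0`, `-x log x ≤ 1/N - x + x log N`. -/
lemma neg_mul_log_le (x N : ℝ) (hx : 0 ≤ x) (hN : 0 < N) :
    -(x * Real.log x) ≤ 1/N - x + x * Real.log N := by
  rcases eq_or_lt_of_le hx with h | h
  · simp [← h]; positivity
  · have hlog : Real.log (1/(N*x)) ≤ 1/(N*x) - 1 :=
      Real.log_le_sub_one_of_pos (by positivity)
    have hrw : Real.log (1/(N*x)) = -(Real.log N + Real.log x) := by
      rw [one_div, Real.log_inv, Real.log_mul (ne_of_gt hN) (ne_of_gt h)]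
    rw [hrw] at hlog
    have := mul_le_mul_of_nonneg_left hlog hx
    have hx' : x * (1/(N*x) - 1) = 1/N - x := by
      field_simp
    nlinarith


/-- The entropy `H(X) = −⟨X, log X⟩` (with the convention `0·log 0 = 0`,
which holds automatically since `Real.log 0 = 0`). -/
noncomputable def entH (m n : ℕ) (X : (Fin m → Fin n) → ℝ) : ℝ :=
  -∑ i, X i * Real.log (X i)

/-- The transport polytope: nonnegative order-`m` tensors with prescribed marginals
`p_k` and total sum one. -/
def Feasible (m n : ℕ) (p : Fin m → Fin n → ℝ) (X : (Fin m → Fin n) → ℝ) : Prop :=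
  (∀ i, 0 ≤ X i) ∧ (∀ k j, marginal m n X k j = p k j) ∧ (∑ i, X i = 1)

/-- The entropy-regularized primal objective `F(X) = ⟨C,X⟩ − γH(X)`. -/
noncomputable def Freg (m n : ℕ) (γ : ℝ) (C : (Fin m → Fin n) → ℝ)
    (X : (Fin m → Fin n) → ℝ) : ℝ :=
  (∑ i, C i * X i) - γ * entH m n X

lemma entH_le_bound (m n : ℕ) (hn : 0 < n) (X : (Fin m → Fin n) → ℝ)
    (h0 : ∀ i, 0 ≤ X i) (h1 : ∑ i, X i = 1) :
    entH m n X ≤ m * Real.log n := by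
  have hcard : (Fintype.card (Fin m → Fin n) : ℝ) = (n : ℝ) ^ m := by
    simp [Fintype.card_fun]
  have hNpos : (0:ℝ) < (n:ℝ) ^ m := by positivity
  have hsum : entH m n X ≤ ∑ i : Fin m → Fin n,
      (1/((n:ℝ)^m) - X i + X i * Real.log ((n:ℝ)^m)) := by
    rw [entH, ← Finset.sum_neg_distrib]
    exact Finset.sum_le_sum fun i _ => neg_mul_log_le (X i) _ (h0 i) hNpos
  have hs : ∑ i : Fin m → Fin n,
      (1/((n:ℝ)^m) - X i + X i * Real.log ((n:ℝ)^m))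
      = (Fintype.card (Fin m → Fin n) : ℝ) * (1/((n:ℝ)^m)) - 1
        + Real.log ((n:ℝ)^m) := by
    rw [Finset.sum_add_distrib, Finset.sum_sub_distrib, ← Finset.sum_mul, h1,
      Finset.sum_const]
    simp [mul_comm]
  rw [hs, hcard] at hsum
  have : ((n:ℝ)^m) * (1/((n:ℝ)^m)) = 1 := by field_simp
  rw [this, Real.log_pow] at hsum
  linarith [hsum]

lemma entH_nonneg (m n : ℕ) (X : (Fin m → Fin n) → ℝ)
    (h0 : ∀ i, 0 ≤ X i) (h1 : ∑ i, X i = 1) : 0 ≤ entH m n X := by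
  rw [entH, ← Finset.sum_neg_distrib]
  apply Finset.sum_nonneg
  intro i _
  have hle : X i ≤ 1 := by
    calc X i ≤ ∑ j, X j := Finset.single_le_sum (fun j _ => h0 j) (Finset.mem_univ i)
    _ = 1 := h1
  simpa [Real.negMulLog, neg_mul] using Real.negMulLog_nonneg (h0 i) hle
/-- primal objective decomposition bound.  For `X̂` feasible, `X̂ᵗ` in the
simplex, `X*` a non-regularized solution and `X*_γ` a regularized solution, if
`‖X̂ − X̂ᵗ‖₁ ≤ 2∑_k ‖p_k(X̂ᵗ) − p_k‖₁` and `F(X̂ᵗ) − F(X*_γ) ≤ F(X̂ᵗ) + φ(ηᵗ)` (weak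
duality), then `⟨C,X̂⟩ ≤ ⟨C,X*⟩ + γ m ln n + (F(X̂ᵗ) + φ(ηᵗ))
+ 2‖C‖_∞ ∑_k ‖p_k(X̂ᵗ) − p_k‖₁`. -/
theorem primal_decomposition_bound (m n : ℕ) (hm : 0 < m) (hn : 0 < n)
    (γ : ℝ) (hγ : 0 < γ)
    (C : (Fin m → Fin n) → ℝ) (hC : ∀ i, 0 ≤ C i)
    (p : Fin m → Fin n → ℝ)
    (Xhat Xt Xs Xγ : (Fin m → Fin n) → ℝ) (φη : ℝ)
    (hXhat : Feasible m n p Xhat)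
    (hXt0 : ∀ i, 0 ≤ Xt i) (hXt1 : ∑ i, Xt i = 1)
    (hXs : Feasible m n p Xs) (hXγ : Feasible m n p Xγ)
    (hmins : ∀ X, Feasible m n p X → ∑ i, C i * Xs i ≤ ∑ i, C i * X i)
    (hminγ : ∀ X, Feasible m n p X → Freg m n γ C Xγ ≤ Freg m n γ C X)
    (h1 : ∑ i, |Xhat i - Xt i| ≤ 2 * ∑ k, ∑ j, |marginal m n Xt k j - p k j|)
    (h2 : Freg m n γ C Xt - Freg m n γ C Xγ ≤ Freg m n γ C Xt + φη) :
    ∑ i, C i * Xhat i ≤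
      (∑ i, C i * Xs i) + γ * m * Real.log n + (Freg m n γ C Xt + φη)
        + 2 * (Finset.univ.sup' ⟨fun _ => ⟨0, hn⟩, Finset.mem_univ _⟩ C)
            * ∑ k, ∑ j, |marginal m n Xt k j - p k j| := by
  set S := Finset.univ.sup' ⟨fun _ => ⟨0, hn⟩, Finset.mem_univ _⟩ C with hS
  have hSle : ∀ i, C i ≤ S := fun i => Finset.le_sup' C (Finset.mem_univ i)
  have hS0 : 0 ≤ S := le_trans (hC (fun _ => ⟨0, hn⟩)) (hSle (fun _ => ⟨0, hn⟩))
  set Δ := ∑ k, ∑ j, |marginal m n Xt k j - p k j| with hΔ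
  have hΔ0 : 0 ≤ Δ := Finset.sum_nonneg fun k _ =>
    Finset.sum_nonneg fun j _ => abs_nonneg _
  -- Step 1: ⟨C,Xhat⟩ ≤ ⟨C,Xt⟩ + 2 S Δ
  have step1 : ∑ i, C i * Xhat i ≤ (∑ i, C i * Xt i) + 2 * S * Δ := by
    have h1' : ∑ i, C i * (Xhat i - Xt i) ≤ S * (2 * Δ) := by
      calc ∑ i, C i * (Xhat i - Xt i)
          ≤ ∑ i, S * |Xhat i - Xt i| := by
            refine Finset.sum_le_sum fun i _ => ?_
            calc C i * (Xhat i - Xt i) ≤ C i * |Xhat i - Xt i| :=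
                  mul_le_mul_of_nonneg_left (le_abs_self _) (hC i)
            _ ≤ S * |Xhat i - Xt i| :=
                  mul_le_mul_of_nonneg_right (hSle i) (abs_nonneg _)
        _ = S * ∑ i, |Xhat i - Xt i| := by rw [Finset.mul_sum]
        _ ≤ S * (2 * Δ) := mul_le_mul_of_nonneg_left h1 hS0
    have : ∑ i, C i * Xhat i = (∑ i, C i * Xt i) + ∑ i, C i * (Xhat i - Xt i) := by
      rw [← Finset.sum_add_distrib]; congr 1; ext i; ring
    rw [this]; linarith
  -- Step 2: ⟨C,Xt⟩ ≤ Freg Xt + γ m log n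
  have step2 : ∑ i, C i * Xt i ≤ Freg m n γ C Xt + γ * m * Real.log n := by
    have hH := entH_le_bound m n hn Xt hXt0 hXt1
    have := mul_le_mul_of_nonneg_left hH (le_of_lt hγ)
    rw [Freg]; linarith
  -- Step 3: Freg Xt ≤ Freg Xγ + (Freg Xt + φη)
  have step3 : Freg m n γ C Xt ≤ Freg m n γ C Xγ + (Freg m n γ C Xt + φη) := by
    linarith
  -- Step 4: Freg Xγ ≤ Freg Xs ≤ ⟨C,Xs⟩
  have step4 : Freg m n γ C Xγ ≤ ∑ i, C i * Xs i := by
    have h4a : Freg m n γ C Xγ ≤ Freg m n γ C Xs := hminγ Xs hXs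
    have hH := entH_nonneg m n Xs hXs.1 hXs.2.2
    have := mul_le_mul_of_nonneg_left hH (le_of_lt hγ)
    simp only [Freg] at h4a ⊢; linarith
  linarith
end
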